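/- arXiv:quant-ph/0607061 — 2 statements merged into one kernel-verified Lean document; each statement's English description precedes it below -/
import Mathlib

section
/- Let d ≥ 2, let ρ be a matrix on ℂ^d ⊗ ℂ^d which is positive semidefinite with trace 1 and whose partial transpose ρ^Γ is positive semidefinite (ρ is a PPT state), and let A be a complex d×d matrix with Tr(AᴴA) = 1. Define the unit vector ψ ∈ ℂ^d ⊗ ℂ^d by ψ[(i,j)] = A[i,j] (so that ψ = √d (A⊗I)Ψ⁺_d, and the largest Schmidt coefficient of ψ is the operator norm ‖A‖). Then ⟨ψ, ρ ψ⟩ ≤ ‖A‖², the square of the operator norm of A. (Hence the witness W_1(ψ) = I − (1/μ_1²)|ψ⟩⟨ψ|, with μ_1 the largest Schmidt coefficient of ψ, cannot detect any PPT state.) -/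
/-!
The partial transpose of `ρ` is positive semidefinite, so `ρ^Γ = ∑ₜ |vₜ⟩⟨vₜ|` and, partial
transposition being an involution, `ρ = ∑ₜ (|vₜ⟩⟨vₜ|)^Γ`. For a single term, reading `v` as a
`d × d` matrix `V`, one finds `⟨ψ, (|v⟩⟨v|)^Γ ψ⟩ = ∑ₐ,꜀ conj (H c a) * H a c` with `H = conj V * Aᵀ`.
Its real part is at most the squared Frobenius norm of `H`, which row by row is at most
`‖A‖² ‖v‖²`. Summing, `Re ⟨ψ, ρ ψ⟩ ≤ ‖A‖² Tr ρ^Γ = ‖A‖² Tr ρ`.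
-/

open Matrix BigOperators
open scoped ComplexOrder

/-- Partial transpose with respect to the first tensor factor:
`X^Γ[(i,j),(k,l)] = X[(k,j),(i,l)]`. -/
def ptg {A B : Type*} (X : Matrix (A × B) (A × B) ℂ) : Matrix (A × B) (A × B) ℂ :=
  Matrix.of fun p q => X (q.1, p.2) (p.1, q.2)

section PartialTranspose

variable {α β : Type*}

theorem ptg_ptg (X : Matrix (α × β) (α × β) ℂ) : ptg (ptg X) = X := rfl

theorem ptg_sum {ι : Type*} (s : Finset ι) (X : ι → Matrix (α × β) (α × β) ℂ) :
    ptg (∑ i ∈ s, X i) = ∑ i ∈ s, ptg (X i) := by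
  ext p q
  simp only [ptg, of_apply, Matrix.sum_apply]

theorem trace_ptg [Fintype α] [Fintype β] (X : Matrix (α × β) (α × β) ℂ) :
    (ptg X).trace = X.trace := rfl

end PartialTranspose

section RCLike

variable {𝕜 n : Type*} [RCLike 𝕜] [Fintype n]

theorem sum_norm_mulVec_sq_le [DecidableEq n] (A : Matrix n n 𝕜) (x : n → 𝕜) :
    ∑ i, ‖(A *ᵥ x) i‖ ^ 2 ≤ ‖toEuclideanCLM (𝕜 := 𝕜) A‖ ^ 2 * ∑ i, ‖x i‖ ^ 2 := by
  have h := (toEuclideanCLM (𝕜 := 𝕜) A).le_opNorm (WithLp.toLp 2 x)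
  rw [toEuclideanCLM_toLp] at h
  simpa only [mul_pow, EuclideanSpace.norm_sq_eq] using pow_le_pow_left₀ (norm_nonneg _) h 2

theorem re_sum_sum_star_mul_swap_le (H : n → n → 𝕜) :
    RCLike.re (∑ i, ∑ j, star (H j i) * H i j) ≤ ∑ i, ∑ j, ‖H i j‖ ^ 2 := by
  have hterm : ∀ i j, RCLike.re (star (H j i) * H i j) ≤ (‖H j i‖ ^ 2 + ‖H i j‖ ^ 2) / 2 := by
    intro i j
    have := (RCLike.re_le_norm (star (H j i) * H i j)).trans_eq (by rw [norm_mul, norm_star])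
    nlinarith [sq_nonneg (‖H j i‖ - ‖H i j‖)]
  calc RCLike.re (∑ i, ∑ j, star (H j i) * H i j)
      ≤ ∑ i, ∑ j, (‖H j i‖ ^ 2 + ‖H i j‖ ^ 2) / 2 := by
        simp only [map_sum]
        exact Finset.sum_le_sum fun i _ => Finset.sum_le_sum fun j _ => hterm i j
    _ = ∑ i, ∑ j, ‖H i j‖ ^ 2 := by
        simp only [← Finset.sum_div, Finset.sum_add_distrib]
        rw [Finset.sum_comm]
        ring

end RCLike

section Overlap

variable {n : Type*} [Fintype n]

theorem star_dotProduct_ptg_vecMulVec_mulVec (A : Matrix n n ℂ) (v : n × n → ℂ) :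
    star (fun p : n × n => A p.1 p.2) ⬝ᵥ
        ptg (vecMulVec v (star v)) *ᵥ (fun p : n × n => A p.1 p.2) =
      ∑ a, ∑ c, star ((A *ᵥ star fun e => v (c, e)) a) * (A *ᵥ star fun e => v (a, e)) c := by
  simp only [dotProduct, mulVec, ptg, vecMulVec, of_apply, Fintype.sum_prod_type, Finset.mul_sum,
    Finset.sum_mul, star_sum, Pi.star_apply, star_mul', star_star]
  refine Finset.sum_congr rfl fun a _ => ?_
  rw [Finset.sum_comm]
  refine Finset.sum_congr rfl fun c _ => ?_
  rw [Finset.sum_comm]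
  exact Finset.sum_congr rfl fun e _ => Finset.sum_congr rfl fun b _ => by ring

variable [DecidableEq n]

theorem re_star_dotProduct_ptg_vecMulVec_mulVec_le (A : Matrix n n ℂ) (v : n × n → ℂ) :
    (star (fun p : n × n => A p.1 p.2) ⬝ᵥ
        ptg (vecMulVec v (star v)) *ᵥ (fun p : n × n => A p.1 p.2)).re ≤
      ‖toEuclideanCLM (𝕜 := ℂ) A‖ ^ 2 * ∑ p, ‖v p‖ ^ 2 := by
  rw [star_dotProduct_ptg_vecMulVec_mulVec, Fintype.sum_prod_type, Finset.mul_sum]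
  calc _ ≤ ∑ a, ∑ c, ‖(A *ᵥ star fun e => v (a, e)) c‖ ^ 2 :=
        re_sum_sum_star_mul_swap_le (𝕜 := ℂ) fun a => A *ᵥ star fun e => v (a, e)
    _ ≤ _ := Finset.sum_le_sum fun a _ => by
        simpa only [Pi.star_apply, norm_star] using sum_norm_mulVec_sq_le A (star fun e => v (a, e))

theorem re_star_dotProduct_ptg_mulVec_le (A : Matrix n n ℂ)
    {σ : Matrix (n × n) (n × n) ℂ} (hσ : σ.PosSemidef) :
    (star (fun p : n × n => A p.1 p.2) ⬝ᵥ ptg σ *ᵥ (fun p : n × n => A p.1 p.2)).re ≤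
      ‖toEuclideanCLM (𝕜 := ℂ) A‖ ^ 2 * σ.trace.re := by
  obtain ⟨m, v, rfl⟩ := posSemidef_iff_eq_sum_vecMulVec.mp hσ
  simp only [ptg_sum, sum_mulVec, dotProduct_sum, trace_sum, trace_vecMulVec, Complex.re_sum,
    Finset.mul_sum]
  refine Finset.sum_le_sum fun t _ => ?_
  refine (re_star_dotProduct_ptg_vecMulVec_mulVec_le A (v t)).trans_eq ?_
  congr 1
  simp only [dotProduct, Pi.star_apply, Complex.re_sum, Complex.star_def, Complex.mul_conj,
    Complex.normSq_eq_norm_sq, Complex.ofReal_re]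

end Overlap

theorem ppt_state_overlap_le_opNorm_sq_general {d : ℕ}
    (ρ : Matrix (Fin d × Fin d) (Fin d × Fin d) ℂ)
    (hρtr : ρ.trace = 1) (hppt : (ptg ρ).PosSemidef)
    (A : Matrix (Fin d) (Fin d) ℂ) :
    (star (fun p : Fin d × Fin d => A p.1 p.2) ⬝ᵥ
        ρ.mulVec (fun p : Fin d × Fin d => A p.1 p.2)).re
      ≤ ‖Matrix.toEuclideanCLM (𝕜 := ℂ) A‖ ^ 2 := by
  have h := re_star_dotProduct_ptg_mulVec_le A hppt
  rwa [ptg_ptg, trace_ptg, hρtr, Complex.one_re, mul_one] at h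

theorem ppt_state_overlap_le_opNorm_sq {d : ℕ} (hd : 2 ≤ d)
    (ρ : Matrix (Fin d × Fin d) (Fin d × Fin d) ℂ)
    (hρ : ρ.PosSemidef) (hρtr : ρ.trace = 1) (hppt : (ptg ρ).PosSemidef)
    (A : Matrix (Fin d) (Fin d) ℂ) (hA : (Aᴴ * A).trace = 1) :
    (star (fun p : Fin d × Fin d => A p.1 p.2) ⬝ᵥ
        ρ.mulVec (fun p : Fin d × Fin d => A p.1 p.2)).re
      ≤ ‖Matrix.toEuclideanCLM (𝕜 := ℂ) A‖ ^ 2 :=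
  ppt_state_overlap_le_opNorm_sq_general ρ hρtr hppt A
end

section
/- Let k ≥ 2 and let Λ : Matrix (Fin n) (Fin n) ℂ →ₗ Matrix (Fin m) (Fin m) ℂ be a linear map which is k-positive. Then Λ is completely positive if and only if the extension id_k ⊗ Λ is decomposable. -/
open Matrix BigOperators
open scoped ComplexOrder

/-- The ampliation `id_s ⊗ Φ` of a map between matrix algebras, acting blockwise:
`((id_s ⊗ Φ) X)[(i,a),(j,b)] = (Φ X_{ij})[a,b]` where `X_{ij}[a,b] = X[(i,a),(j,b)]`. -/
def amplG {I J : Type*} (s : ℕ) (Φ : Matrix I I ℂ → Matrix J J ℂ) :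
    Matrix (Fin s × I) (Fin s × I) ℂ → Matrix (Fin s × J) (Fin s × J) ℂ :=
  fun X => Matrix.of fun p q => Φ (Matrix.of fun a b => X (p.1, a) (q.1, b)) p.2 q.2

/-- A map between matrix algebras is positive if it sends positive semidefinite
matrices to positive semidefinite matrices. -/
def IsPosMap {I J : Type*} [Fintype I] [Fintype J]
    (Φ : Matrix I I ℂ → Matrix J J ℂ) : Prop :=
  ∀ X : Matrix I I ℂ, X.PosSemidef → (Φ X).PosSemidef

/-- A map is completely positive if all its ampliations `id_s ⊗ Φ`, `s ≥ 1`,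
are positive. -/
def IsCP {I J : Type*} [Fintype I] [Fintype J]
    (Φ : Matrix I I ℂ → Matrix J J ℂ) : Prop :=
  ∀ s : ℕ, 1 ≤ s → IsPosMap (amplG s Φ)

/-- A linear map `Φ` between matrix algebras is decomposable if `Φ = Φ₁ + Φ₂ ∘ T`
with `Φ₁`, `Φ₂` completely positive and `T` the transposition. -/
def IsDecomposableMap {I J : Type*} [Fintype I] [Fintype J]
    (Φ : Matrix I I ℂ → Matrix J J ℂ) : Prop :=
  ∃ Φ₁ Φ₂ : Matrix I I ℂ →ₗ[ℂ] Matrix J J ℂ,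
    IsCP (Φ₁ : Matrix I I ℂ → Matrix J J ℂ) ∧
    IsCP (Φ₂ : Matrix I I ℂ → Matrix J J ℂ) ∧
    ∀ X : Matrix I I ℂ, Φ X = Φ₁ X + Φ₂ Xᵀ

/-!
Complete positivity of `Φ` is positive semidefiniteness of its Choi matrix `C_Φ`, and then `Φ` is
a sum of conjugations `X ↦ K X Kᴴ`; the ampliation of such a conjugation is conjugation by
`1 ⊗ K`, so ampliations of CP maps are CP and decomposable.

Conversely, if `id_k ⊗ Λ = Φ₁ + Φ₂ ∘ T`, then on Choi matrices `|Ω⟩⟨Ω| ⊗ C_Λ = C_{Φ₁} + C_{Φ₂}^Γ`,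
where `Γ` is the partial transpose and `Ω = ∑ᵢ |i⟩|i⟩`. The left side vanishes on the diagonal
entries outside the `(i, i)` blocks, which kills the diagonal of `C_{Φ₂}` there. For the entries
inside these blocks, pick `i ≠ j` in `Fin k` (this is where `k ≥ 2` enters): the quadratic form
of `C_{Φ₁}` at `e_s - e_t`, for the `i`- and `j`-copies `s`, `t` of an index, equals
`-(B_ss + B_tt) ≥ 0` with `B = C_{Φ₂}`. Hence
`C_{Φ₂}` has zero trace, so it vanishes, and `C_Λ` is a principal block of `C_{Φ₁}`.
-/

namespace Matrix.PosSemidef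

variable {ι : Type*} [Fintype ι] [DecidableEq ι] {M : Matrix ι ι ℂ}

lemma apply_eq_zero_of_diag_eq_zero (hM : M.PosSemidef) {s : ι} (hs : M s s = 0) (t : ι) :
    M s t = 0 := by
  have hcol : M *ᵥ Pi.single s 1 = 0 :=
    (hM.dotProduct_mulVec_zero_iff _).mp (by simpa [mulVec_single, dotProduct_single] using hs)
  have hts : M t s = 0 := by simpa [mulVec_single] using congrFun hcol t
  rw [← hM.isHermitian.apply s t, hts, star_zero]

lemma sub_sub_add_nonneg (hM : M.PosSemidef) (s t : ι) :
    0 ≤ M s s - M s t - M t s + M t t := by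
  have := hM.dotProduct_mulVec_nonneg (Pi.single s 1 - Pi.single t 1)
  simp only [star_sub, Pi.star_single, star_one, mulVec_sub, mulVec_single, sub_dotProduct,
    dotProduct_sub, single_dotProduct, one_mul] at this
  simpa [sub_eq_add_neg, add_comm, add_left_comm, add_assoc] using this

end Matrix.PosSemidef

open scoped Kronecker

section Choi

variable {I J : Type*} [DecidableEq I]

noncomputable def choiMatrix (Φ : Matrix I I ℂ →ₗ[ℂ] Matrix J J ℂ) : Matrix (I × J) (I × J) ℂ :=
  of fun r t => Φ (single r.1 t.1 1) r.2 t.2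

@[simp]
lemma choiMatrix_apply (Φ : Matrix I I ℂ →ₗ[ℂ] Matrix J J ℂ) (a b : I) (p q : J) :
    choiMatrix Φ (a, p) (b, q) = Φ (single a b 1) p q := rfl

lemma apply_eq_sum_choiMatrix [Fintype I] (Φ : Matrix I I ℂ →ₗ[ℂ] Matrix J J ℂ)
    (X : Matrix I I ℂ) (p q : J) :
    Φ X p q = ∑ a, ∑ b, X a b * choiMatrix Φ (a, p) (b, q) := by
  have hX : X = ∑ a, ∑ b, X a b • single a b 1 := by
    simpa only [smul_single, smul_eq_mul, mul_one] using matrix_eq_sum_single X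
  conv_lhs => rw [hX]
  simp only [map_sum, map_smul, Matrix.sum_apply, Matrix.smul_apply, smul_eq_mul, choiMatrix_apply]

lemma choiMatrix_posSemidef_of_isPosMap_amplG [Fintype I] [Fintype J] {s : ℕ} (e : I ↪ Fin s)
    (Φ : Matrix I I ℂ →ₗ[ℂ] Matrix J J ℂ) (hΦ : IsPosMap (amplG s Φ)) :
    (choiMatrix Φ).PosSemidef := by
  let Ω : Fin s × I → ℂ := fun r => if r.1 = e r.2 then 1 else 0
  have hblock (a b : I) :
      (of fun c d => vecMulVec Ω (star Ω) (e a, c) (e b, d)) = single a b 1 := by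
    ext c d
    simp only [Ω, of_apply, vecMulVec_apply, single_apply, Pi.star_apply,
      EmbeddingLike.apply_eq_iff_eq]
    split_ifs <;> simp_all
  have hΩ : choiMatrix Φ = (amplG s Φ (vecMulVec Ω (star Ω))).submatrix
      (fun r => (e r.1, r.2)) (fun r => (e r.1, r.2)) := by
    ext ⟨a, p⟩ ⟨b, q⟩
    simp [amplG, hblock]
  rw [hΩ]
  exact (hΦ _ (posSemidef_vecMulVec_self_star Ω)).submatrix _

lemma amplG_single_apply (Λ : Matrix I I ℂ →ₗ[ℂ] Matrix J J ℂ)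
    {s : ℕ} (i j x y : Fin s) (a b : I) (p q : J) :
    amplG s Λ (single (i, a) (j, b) 1) (x, p) (y, q) =
      if x = i ∧ y = j then choiMatrix Λ (a, p) (b, q) else 0 := by
  have hblock : (of fun c d => single (i, a) (j, b) (1 : ℂ) (x, c) (y, d)) =
      if x = i ∧ y = j then single a b 1 else 0 := by
    ext c d
    simp only [of_apply, single_apply, Prod.mk.injEq]
    split_ifs <;> simp_all
  simp only [amplG, of_apply, hblock]
  split_ifs <;> simp

end Choi

section CompletelyPositive

variable {I J : Type*}

def amplLinearMap (s : ℕ) (Φ : Matrix I I ℂ →ₗ[ℂ] Matrix J J ℂ) :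
    Matrix (Fin s × I) (Fin s × I) ℂ →ₗ[ℂ] Matrix (Fin s × J) (Fin s × J) ℂ where
  toFun := amplG s Φ
  map_add' X Y := by
    ext
    exact congrFun₂ (map_add Φ (of fun a b => X _ _) (of fun a b => Y _ _)) _ _
  map_smul' c X := by
    ext
    exact congrFun₂ (map_smul Φ c (of fun a b => X _ _)) _ _

@[simp]
lemma coe_amplLinearMap (s : ℕ) (Φ : Matrix I I ℂ →ₗ[ℂ] Matrix J J ℂ) :
    ⇑(amplLinearMap s Φ) = amplG s Φ := rfl

lemma amplG_sum {R : Type*} (t : Finset R) (Φ : R → Matrix I I ℂ → Matrix J J ℂ) (s : ℕ) :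
    amplG s (fun X => ∑ r ∈ t, Φ r X) = fun X => ∑ r ∈ t, amplG s (Φ r) X := by
  funext X
  ext
  simp [amplG, Matrix.sum_apply]

lemma amplG_conj [Fintype I] (s : ℕ) (K : Matrix J I ℂ) :
    amplG s (fun X : Matrix I I ℂ => K * X * Kᴴ) = fun X =>
      ((1 : Matrix (Fin s) (Fin s) ℂ) ⊗ₖ K) * X * ((1 : Matrix (Fin s) (Fin s) ℂ) ⊗ₖ K)ᴴ := by
  funext X
  ext ⟨i, p⟩ ⟨j, q⟩
  simp [amplG, Matrix.mul_apply, Fintype.sum_prod_type, one_apply, Finset.sum_mul,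
    apply_ite (starRingEnd ℂ)]

variable [Fintype I] [Fintype J]

lemma isCP_zero : IsCP ⇑(0 : Matrix I I ℂ →ₗ[ℂ] Matrix J J ℂ) := by
  intro s _ X _
  convert PosSemidef.zero
  ext
  simp [amplG]

lemma isCP_conj (K : Matrix J I ℂ) : IsCP fun X : Matrix I I ℂ => K * X * Kᴴ := by
  intro s _ X hX
  rw [amplG_conj]
  exact hX.mul_mul_conjTranspose_same _

lemma IsCP.sum {R : Type*} (t : Finset R) {Φ : R → Matrix I I ℂ → Matrix J J ℂ}
    (hΦ : ∀ r ∈ t, IsCP (Φ r)) : IsCP fun X => ∑ r ∈ t, Φ r X := by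
  intro s hs X hX
  rw [amplG_sum]
  exact posSemidef_sum t fun r hr => hΦ r hr s hs X hX

variable [DecidableEq I]

lemma exists_kraus_of_choiMatrix_posSemidef (Φ : Matrix I I ℂ →ₗ[ℂ] Matrix J J ℂ)
    (hΦ : (choiMatrix Φ).PosSemidef) :
    ∃ (m : ℕ) (K : Fin m → Matrix J I ℂ), ⇑Φ = fun X : Matrix I I ℂ => ∑ r, K r * X * (K r)ᴴ := by
  obtain ⟨m, v, hv⟩ := posSemidef_iff_eq_sum_vecMulVec.mp hΦ
  refine ⟨m, fun r => of fun p a => v r (a, p), ?_⟩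
  funext X
  ext p q
  rw [apply_eq_sum_choiMatrix, hv]
  simp only [Matrix.sum_apply, vecMulVec_apply, Matrix.mul_apply, conjTranspose_apply, of_apply,
    Pi.star_apply, Finset.mul_sum, Finset.sum_mul]
  conv_lhs => enter [2, a]; rw [Finset.sum_comm]
  conv_rhs => enter [2, r]; rw [Finset.sum_comm]
  rw [Finset.sum_comm]
  exact Finset.sum_congr rfl fun _ _ => Finset.sum_congr rfl fun _ _ =>
    Finset.sum_congr rfl fun _ _ => by ring

lemma isCP_of_choiMatrix_posSemidef (Φ : Matrix I I ℂ →ₗ[ℂ] Matrix J J ℂ)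
    (hΦ : (choiMatrix Φ).PosSemidef) : IsCP Φ := by
  obtain ⟨m, K, hK⟩ := exists_kraus_of_choiMatrix_posSemidef Φ hΦ
  rw [hK]
  exact IsCP.sum _ fun r _ => isCP_conj (K r)

lemma isCP_iff_choiMatrix_posSemidef (Φ : Matrix I I ℂ →ₗ[ℂ] Matrix J J ℂ) :
    IsCP Φ ↔ (choiMatrix Φ).PosSemidef :=
  ⟨fun h => choiMatrix_posSemidef_of_isPosMap_amplG
      ((Fintype.equivFin I).toEmbedding.trans Fin.castSuccEmb) Φ (h _ (Nat.le_add_left 1 _)),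
    isCP_of_choiMatrix_posSemidef Φ⟩

lemma IsCP.amplG {Φ : Matrix I I ℂ →ₗ[ℂ] Matrix J J ℂ} (hΦ : IsCP Φ) (k : ℕ) :
    IsCP (amplG k Φ) := by
  obtain ⟨m, K, hK⟩ :=
    exists_kraus_of_choiMatrix_posSemidef Φ ((isCP_iff_choiMatrix_posSemidef Φ).mp hΦ)
  rw [hK, amplG_sum]
  simp only [amplG_conj]
  exact IsCP.sum _ fun r _ => isCP_conj _

end CompletelyPositive

section PartialTranspose

variable {K I J : Type*} [Fintype K] [DecidableEq K] [Fintype I] [DecidableEq I] [Fintype J]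
  [DecidableEq J] [Nontrivial K] {C : Matrix (I × J) (I × J) ℂ}
  {A B : Matrix ((K × I) × (K × J)) ((K × I) × (K × J)) ℂ}

/- The hypothesis `h` below says that `|Ω⟩⟨Ω| ⊗ C`, with `Ω = ∑ᵢ |i⟩|i⟩` on `K`, is the sum of `A`
and of the partial transpose of `B` in its `K × I` factor: this is what Choi matrices make of
`id_K ⊗ Λ = Φ₁ + Φ₂ ∘ T`. -/
lemma eq_zero_of_ite_eq_add_partialTranspose (hA : A.PosSemidef) (hB : B.PosSemidef)
    (h : ∀ i j x y a b p q, (if x = i ∧ y = j then C (a, p) (b, q) else 0) =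
      A ((i, a), (x, p)) ((j, b), (y, q)) + B ((j, b), (x, p)) ((i, a), (y, q))) :
    B = 0 := by
  have hoff (i x a p) (hx : x ≠ i) : B ((i, a), (x, p)) ((i, a), (x, p)) = 0 := by
    have hixx := h i i x x a a p p
    rw [if_neg (by tauto)] at hixx
    exact ((add_eq_zero_iff_of_nonneg hA.diag_nonneg hB.diag_nonneg).mp hixx.symm).2
  have hon (i a p) : B ((i, a), (i, p)) ((i, a), (i, p)) = 0 := by
    obtain ⟨j, hj⟩ := exists_ne i
    have hii := h i i i i a a p p
    have hjj := h j j j j a a p p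
    have hij := h i j i j a a p p
    have hji := h j i j i a a p p
    simp only [and_self, if_true] at hii hjj hij hji
    rw [hB.apply_eq_zero_of_diag_eq_zero (hoff j i a p hj.symm), add_zero] at hij
    rw [hB.apply_eq_zero_of_diag_eq_zero (hoff i j a p hj), add_zero] at hji
    have hsum :
        0 ≤ -(B ((i, a), (i, p)) ((i, a), (i, p)) + B ((j, a), (j, p)) ((j, a), (j, p))) := by
      convert hA.sub_sub_add_nonneg ((i, a), (i, p)) ((j, a), (j, p)) using 1
      linear_combination hii + hjj - hij - hji
    have hsum' := le_antisymm (neg_nonneg.mp hsum) (add_nonneg hB.diag_nonneg hB.diag_nonneg)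
    exact ((add_eq_zero_iff_of_nonneg hB.diag_nonneg hB.diag_nonneg).mp hsum').1
  refine hB.trace_eq_zero_iff.mp (Finset.sum_eq_zero fun ⟨⟨i, a⟩, ⟨x, p⟩⟩ _ => ?_)
  rcases eq_or_ne x i with rfl | hx
  exacts [hon x a p, hoff i x a p hx]

lemma posSemidef_of_ite_eq_add_partialTranspose (hA : A.PosSemidef) (hB : B.PosSemidef)
    (h : ∀ i j x y a b p q, (if x = i ∧ y = j then C (a, p) (b, q) else 0) =
      A ((i, a), (x, p)) ((j, b), (y, q)) + B ((j, b), (x, p)) ((i, a), (y, q))) :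
    C.PosSemidef := by
  obtain ⟨i⟩ := ‹Nontrivial K›.to_nonempty
  have hB0 := eq_zero_of_ite_eq_add_partialTranspose hA hB h
  have hC : C = A.submatrix (fun r => ((i, r.1), (i, r.2))) (fun r => ((i, r.1), (i, r.2))) := by
    ext ⟨a, p⟩ ⟨b, q⟩
    simpa [hB0] using h i i i i a b p q
  exact hC ▸ hA.submatrix _

end PartialTranspose

theorem kPositive_CP_iff_ampliation_decomposable_general {n m k : ℕ} (hk : 2 ≤ k)
    (Λ : Matrix (Fin n) (Fin n) ℂ →ₗ[ℂ] Matrix (Fin m) (Fin m) ℂ) :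
    IsCP (Λ : Matrix (Fin n) (Fin n) ℂ → Matrix (Fin m) (Fin m) ℂ) ↔
      IsDecomposableMap
        (amplG k (Λ : Matrix (Fin n) (Fin n) ℂ → Matrix (Fin m) (Fin m) ℂ)) := by
  refine ⟨fun hΛ => ⟨amplLinearMap k Λ, 0, hΛ.amplG k, isCP_zero, fun X => by simp⟩, ?_⟩
  rintro ⟨Φ₁, Φ₂, hΦ₁, hΦ₂, hΛ⟩
  have : Nontrivial (Fin k) := Fin.nontrivial_iff_two_le.mpr hk
  rw [isCP_iff_choiMatrix_posSemidef] at hΦ₁ hΦ₂ ⊢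
  refine posSemidef_of_ite_eq_add_partialTranspose hΦ₁ hΦ₂ fun i j x y a b p q => ?_
  simpa [amplG_single_apply] using congrFun₂ (hΛ (single (i, a) (j, b) 1)) (x, p) (y, q)

theorem kPositive_CP_iff_ampliation_decomposable {n m k : ℕ} (hk : 2 ≤ k)
    (Λ : Matrix (Fin n) (Fin n) ℂ →ₗ[ℂ] Matrix (Fin m) (Fin m) ℂ)
    (hkpos : IsPosMap (amplG k (Λ : Matrix (Fin n) (Fin n) ℂ → Matrix (Fin m) (Fin m) ℂ))) :
    IsCP (Λ : Matrix (Fin n) (Fin n) ℂ → Matrix (Fin m) (Fin m) ℂ) ↔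
      IsDecomposableMap
        (amplG k (Λ : Matrix (Fin n) (Fin n) ℂ → Matrix (Fin m) (Fin m) ℂ)) :=
  kPositive_CP_iff_ampliation_decomposable_general hk Λ
end
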